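/- arXiv:1203.3222 — 8 statements merged into one kernel-verified Lean document; each statement's English description precedes it below -/
import Mathlib

section
/- If f : ℝ → ℝ satisfies Δ_h^{n+1} f(x) = 0 for all x, h ∈ ℝ (where Δ_h f(x) = f(x+h) - f(x)), then for every x₀, h₀ ∈ ℝ there exists a polynomial p of degree ≤ n such that f(x₀ + r·h₀) = p(x₀ + r·h₀) for all rational r. -/
noncomputable def fdiff (h : ℝ) (f : ℝ → ℝ) : ℝ → ℝ := fun x => f (x + h) - f x

def IsMonomial (n : ℕ) (f : ℝ → ℝ) : Prop :=
  ∀ x h : ℝ, (1 / (n.factorial : ℝ)) * ((fdiff h)^[n] f) x = f h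

/-!
Fix a step `h ≠ 0`. If `Δ_h^{n+1} f = 0`, the Gregory–Newton formula truncates after `n + 1`
terms, so on the progression `y + ℕ h` the function `f` agrees with the Newton interpolation
polynomial `∑_{j ≤ n} Δ_h^j f(y) · binom((x - y)/h, j)`, of degree `≤ n`. Starting the progression
further to the left gives polynomials that agree on infinitely many points, hence coincide, so the
agreement extends to `y + ℤ h`. Finally, for `r = a / b` the point `x₀ + r h₀` lies on
`x₀ + ℤ (h₀ / b)`, which contains `x₀ + ℤ h₀`; so the polynomial attached to the finer step is the
one attached to `h₀`.
-/

open Finset Polynomial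
open scoped Nat

theorem shift_eq_sum_fwdDiff_iter_of_fwdDiff_iter_eq_zero {M G : Type*} [AddCommMonoid M]
    [AddCommGroup G] {h : M} {f : M → G} {n : ℕ} (hf : (fwdDiff h)^[n + 1] f = 0) (y : M) (k : ℕ) :
    f (y + k • h) = ∑ j ∈ range (n + 1), k.choose j • (fwdDiff h)^[j] f y := by
  have hvanish : ∀ j, n + 1 ≤ j → (fwdDiff h)^[j] f = 0 := fun j hj => by
    obtain ⟨m, rfl⟩ := Nat.exists_eq_add_of_le' hj
    rw [Function.iterate_add_apply, hf]
    exact Function.iterate_fixed (fwdDiff_const h 0) m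
  rw [shift_eq_sum_fwdDiff_iter h f k y]
  rcases le_total k n with hk | hk
  · refine sum_subset (range_subset_range.2 (by omega)) fun j hj hj' => ?_
    rw [Nat.choose_eq_zero_of_lt (by simp at hj'; omega), zero_smul]
  · refine (sum_subset (range_subset_range.2 (by omega)) fun j _ hj => ?_).symm
    rw [hvanish j (by simpa using hj), Pi.zero_apply, smul_zero]

section Newton

variable {K : Type*} [Field K]

/-- `descPochhammer K j` evaluated at `t`, divided by `j !`, is the binomial coefficient
`binom(t, j)`. -/
noncomputable def newtonPoly (f : K → K) (n : ℕ) (y h : K) : K[X] :=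
  ∑ j ∈ range (n + 1), C ((fwdDiff h)^[j] f y / j !) * (descPochhammer K j).comp (C h⁻¹ * (X - C y))

theorem natDegree_newtonPoly_le (f : K → K) (n : ℕ) (y h : K) :
    (newtonPoly f n y h).natDegree ≤ n := by
  refine natDegree_sum_le_of_forall_le _ _ fun j hj => (natDegree_C_mul_le _ _).trans ?_
  calc _ ≤ (descPochhammer K j).natDegree * (C h⁻¹ * (X - C y)).natDegree := natDegree_comp_le
    _ ≤ j * 1 := by
        rw [descPochhammer_natDegree]
        exact Nat.mul_le_mul_left _ ((natDegree_C_mul_le _ _).trans (natDegree_X_sub_C_le y))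
    _ ≤ n := by simp at hj; omega

theorem eval_newtonPoly_add_natCast_mul [CharZero K] {f : K → K} {n : ℕ} {h : K} (hh : h ≠ 0)
    (hf : (fwdDiff h)^[n + 1] f = 0) (y : K) (k : ℕ) :
    (newtonPoly f n y h).eval (y + k * h) = f (y + k * h) := by
  have hk : (C h⁻¹ * (X - C y)).eval (y + k * h) = (k : K) := by
    simp [mul_comm h⁻¹, hh]
  rw [← nsmul_eq_mul, shift_eq_sum_fwdDiff_iter_of_fwdDiff_iter_eq_zero hf, newtonPoly,
    eval_finsetSum]
  refine sum_congr rfl fun j _ => ?_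
  rw [eval_mul, eval_C, eval_comp, nsmul_eq_mul, hk, descPochhammer_eval_eq_descFactorial,
    Nat.descFactorial_eq_factorial_mul_choose, nsmul_eq_mul]
  push_cast
  field_simp [Nat.factorial_ne_zero]

theorem Polynomial.eq_of_eval_add_natCast_mul_eq [CharZero K] {p q : K[X]} {y h : K} (hh : h ≠ 0)
    (H : ∀ k : ℕ, p.eval (y + k * h) = q.eval (y + k * h)) : p = q :=
  eq_of_infinite_eval_eq p q <| Set.infinite_of_injective_forall_mem
    (fun a b hab => by simpa [hh] using hab) H

theorem exists_natDegree_le_eval_add_intCast_mul [CharZero K] {f : K → K} {n : ℕ} {h : K}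
    (hh : h ≠ 0) (hf : (fwdDiff h)^[n + 1] f = 0) (y : K) :
    ∃ p : K[X], p.natDegree ≤ n ∧ ∀ k : ℤ, p.eval (y + k * h) = f (y + k * h) := by
  refine ⟨newtonPoly f n y h, natDegree_newtonPoly_le f n y h, fun k => ?_⟩
  set m := k.natAbs
  -- the progression `y - m h + ℕ h` contains both `y + ℕ h` and `y + k h`
  have hshift (j : ℕ) : y + j * h = (y - m * h) + (m + j : ℕ) * h := by push_cast; ring
  have hstart : newtonPoly f n (y - m * h) h = newtonPoly f n y h :=
    eq_of_eval_add_natCast_mul_eq hh fun j => by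
      rw [hshift, eval_newtonPoly_add_natCast_mul hh hf, ← hshift,
        eval_newtonPoly_add_natCast_mul hh hf]
  have hk : y + k * h = (y - m * h) + (k + m).toNat * h := by
    rw [show ((k + m).toNat : K) = k + m by exact_mod_cast Int.toNat_of_nonneg (by omega)]
    ring
  rw [← hstart, hk, eval_newtonPoly_add_natCast_mul hh hf]

theorem exists_natDegree_le_eval_add_ratCast_mul [CharZero K] {f : K → K} {n : ℕ}
    (hf : ∀ h, (fwdDiff h)^[n + 1] f = 0) (x₀ h₀ : K) :
    ∃ p : K[X], p.natDegree ≤ n ∧ ∀ r : ℚ, p.eval (x₀ + r * h₀) = f (x₀ + r * h₀) := by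
  rcases eq_or_ne h₀ 0 with rfl | hh
  · exact ⟨C (f x₀), by simp, fun r => by simp⟩
  obtain ⟨p, hpdeg, hp⟩ := exists_natDegree_le_eval_add_intCast_mul hh (hf h₀) x₀
  refine ⟨p, hpdeg, fun r => ?_⟩
  have hden : (r.den : K) ≠ 0 := Nat.cast_ne_zero.2 r.den_nz
  obtain ⟨q, -, hq⟩ := exists_natDegree_le_eval_add_intCast_mul (div_ne_zero hh hden) (hf _) x₀
  have hsub (k : ℕ) : x₀ + k * h₀ = x₀ + ((k * r.den : ℕ) : ℤ) * (h₀ / r.den) := by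
    push_cast; field_simp
  have hqp : q = p := eq_of_eval_add_natCast_mul_eq hh fun k => by
    rw [hsub, hq, ← hsub, ← Int.cast_natCast, hp]
  have hr : x₀ + r * h₀ = x₀ + r.num * (h₀ / r.den) := by rw [Rat.cast_def]; ring
  rw [← hqp, hr, hq]

end Newton

theorem stmt0 (n : ℕ) (f : ℝ → ℝ)
    (hf : ∀ x h : ℝ, ((fdiff h)^[n + 1] f) x = 0) (x₀ h₀ : ℝ) :
    ∃ p : Polynomial ℝ, p.degree ≤ n ∧
      ∀ r : ℚ, f (x₀ + (r : ℝ) * h₀) = p.eval (x₀ + (r : ℝ) * h₀) := by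
  obtain ⟨p, hdeg, hp⟩ :=
    exists_natDegree_le_eval_add_ratCast_mul (fun h => funext fun x => hf x h) x₀ h₀
  exact ⟨p, degree_le_of_natDegree_le hdeg, fun r => (hp r).symm⟩
end

section
/- If f : ℝ → ℝ satisfies Δ_h^{n+1} f(x) = 0 for all x, h ∈ ℝ, and p is a polynomial of degree ≤ n with f(x₀ + k h₀) = p(x₀ + k h₀) for k = 0, 1, ..., n, then f(x₀ + (n+1) h₀) = p(x₀ + (n+1) h₀). -/
open Finset Polynomial

lemma fwdDiff_iter_sub {M G : Type*} [AddCommMonoid M] [AddCommGroup G] (h : M) (f g : M → G)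
    (n : ℕ) : (fwdDiff h)^[n] (f - g) = (fwdDiff h)^[n] f - (fwdDiff h)^[n] g := by
  simp only [← fwdDiff_aux.coe_fwdDiffₗ_pow, map_sub]

lemma fwdDiff_iter_eq_fwdDiff_one_iter {R G : Type*} [Semiring R] [AddCommGroup G] (h : R)
    (f : R → G) (n : ℕ) (x : R) :
    (fwdDiff h)^[n] f x = (fwdDiff 1)^[n] (fun t ↦ f (x + t * h)) 0 := by
  simp only [fwdDiff_iter_eq_sum_shift, nsmul_eq_mul, zero_add, mul_one]

theorem Polynomial.fwdDiff_iter_eval_eq_zero_of_natDegree_lt {R : Type*} [CommRing R]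
    {P : R[X]} {n : ℕ} (hP : P.natDegree < n) (h : R) : (fwdDiff h)^[n] P.eval = 0 := by
  funext x
  have hline : (fun t ↦ P.eval (x + t * h)) = (P.comp (C h * X + C x)).eval := by
    funext t; rw [eval_comp]; congr 1; simp only [eval_add, eval_mul, eval_C, eval_X]; ring
  have hdeg : (P.comp (C h * X + C x)).natDegree < n :=
    calc (P.comp (C h * X + C x)).natDegree ≤ P.natDegree * (C h * X + C x).natDegree :=
          natDegree_comp_le
      _ ≤ P.natDegree * 1 := Nat.mul_le_mul_left _ natDegree_linear_le
      _ < n := by rwa [mul_one]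
  rw [fwdDiff_iter_eq_fwdDiff_one_iter, hline, fwdDiff_iter_eq_zero_of_degree_lt hdeg]
  rfl

theorem eq_zero_of_fwdDiff_iter_eq_zero {M G : Type*} [AddCommMonoid M] [AddCommGroup G]
    {g : M → G} {x h : M} {n : ℕ} (hΔ : (fwdDiff h)^[n + 1] g x = 0)
    (hg : ∀ k ≤ n, g (x + k • h) = 0) : g (x + (n + 1) • h) = 0 := by
  rw [fwdDiff_iter_eq_sum_shift, sum_range_succ, sum_eq_zero fun k hk ↦ by
    rw [hg k (Nat.lt_succ_iff.mp (mem_range.mp hk)), smul_zero]] at hΔ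
  simpa using hΔ

theorem stmt1 (n : ℕ) (f : ℝ → ℝ)
    (hf : ∀ x h : ℝ, ((fdiff h)^[n + 1] f) x = 0)
    (p : Polynomial ℝ) (hp : p.degree ≤ n) (x₀ h₀ : ℝ)
    (hinterp : ∀ k : ℕ, k ≤ n → f (x₀ + (k : ℝ) * h₀) = p.eval (x₀ + (k : ℝ) * h₀)) :
    f (x₀ + ((n : ℝ) + 1) * h₀) = p.eval (x₀ + ((n : ℝ) + 1) * h₀) := by
  have hdeg : p.natDegree < n + 1 := Nat.lt_succ_of_le (natDegree_le_iff_degree_le.mpr hp)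
  have hΔ : (fwdDiff h₀)^[n + 1] (f - p.eval) x₀ = 0 := by
    rw [fwdDiff_iter_sub, p.fwdDiff_iter_eval_eq_zero_of_natDegree_lt hdeg]
    exact (sub_zero _).trans (hf x₀ h₀)
  have hlast := eq_zero_of_fwdDiff_iter_eq_zero hΔ fun k hk ↦ by
    simpa [nsmul_eq_mul, sub_eq_zero] using hinterp k hk
  simpa [nsmul_eq_mul, sub_eq_zero] using hlast
end

section
/- If f : ℝ → ℝ is an n-monomial, i.e. (1/n!) Δ_h^n f(x) = f(h) for all x, h ∈ ℝ, then for every h₀ ≠ 0 there exists a constant A (depending only on h₀) such that f(t) = A t^n for all t ∈ h₀·ℚ. -/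
section fdiff

variable {ι : Type*}

lemma fdiff_sum (h : ℝ) (s : Finset ι) (g : ι → ℝ → ℝ) :
    fdiff h (∑ j ∈ s, g j) = ∑ j ∈ s, fdiff h (g j) := by
  funext x
  simp only [fdiff, Finset.sum_apply, Finset.sum_sub_distrib]

lemma iterate_fdiff_sum (h : ℝ) (m : ℕ) (s : Finset ι) (g : ι → ℝ → ℝ) :
    (fdiff h)^[m] (∑ j ∈ s, g j) = ∑ j ∈ s, (fdiff h)^[m] (g j) := by
  induction m generalizing g with
  | zero => rfl
  | succ m ih => simp only [Function.iterate_succ_apply, fdiff_sum, ih]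

lemma commute_fdiff_translate (h c : ℝ) :
    Function.Commute (fdiff h) (fun f y => f (y + c)) := by
  intro f
  funext y
  simp only [fdiff, add_right_comm]

lemma iterate_fdiff_translate (h c : ℝ) (m : ℕ) (f : ℝ → ℝ) :
    (fdiff h)^[m] (fun y => f (y + c)) = fun y => (fdiff h)^[m] f (y + c) :=
  (commute_fdiff_translate h c).iterate_left m f

lemma fdiff_nat_mul (h : ℝ) (k : ℕ) (f : ℝ → ℝ) :
    fdiff (k * h) f = ∑ j ∈ Finset.range k, fun x => fdiff h f (x + j * h) := by
  funext x
  have telescope := Finset.sum_range_sub (fun j : ℕ => f (x + j * h)) k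
  simp only [Nat.cast_zero, zero_mul, add_zero] at telescope
  simp only [fdiff, Finset.sum_apply, ← telescope]
  refine Finset.sum_congr rfl fun j _ => ?_
  rw [Nat.cast_succ, add_one_mul, add_assoc]

lemma iterate_fdiff_nat_mul_of_const {h C : ℝ} {n : ℕ} {f : ℝ → ℝ}
    (hC : ∀ x, (fdiff h)^[n] f x = C) (k : ℕ) (x : ℝ) :
    (fdiff (k * h))^[n] f x = (k : ℝ) ^ n * C := by
  induction n generalizing f x with
  | zero => simpa using hC x
  | succ n ih =>
    have hC' : ∀ x, (fdiff h)^[n] (fdiff h f) x = C := hC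
    rw [Function.iterate_succ_apply, fdiff_nat_mul, iterate_fdiff_sum, Finset.sum_apply]
    simp only [iterate_fdiff_translate, ih hC', Finset.sum_const, Finset.card_range, nsmul_eq_mul]
    ring

lemma iterate_fdiff_neg (h : ℝ) (n : ℕ) (f : ℝ → ℝ) (x : ℝ) :
    (fdiff (-h))^[n] f x = (-1) ^ n * (fdiff h)^[n] f (x - n * h) := by
  induction n generalizing x with
  | zero => simp
  | succ n ih =>
    rw [Function.iterate_succ_apply', Function.iterate_succ_apply']
    simp only [fdiff, ih]
    push_cast
    ring_nf

end fdiff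

namespace IsMonomial

variable {n : ℕ} {f : ℝ → ℝ}

lemma iterate_fdiff_eq (hf : IsMonomial n f) (x h : ℝ) :
    (fdiff h)^[n] f x = n.factorial * f h := by
  rw [← hf x h, ← mul_assoc, mul_one_div_cancel (by positivity), one_mul]

lemma map_nat_mul (hf : IsMonomial n f) (k : ℕ) (t : ℝ) : f (k * t) = k ^ n * f t := by
  have h := hf.iterate_fdiff_eq 0 (k * t)
  rw [iterate_fdiff_nat_mul_of_const (fun x => hf.iterate_fdiff_eq x t)] at h
  have hn : (n.factorial : ℝ) ≠ 0 := by positivity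
  apply mul_left_cancel₀ hn
  linear_combination -h

lemma map_neg (hf : IsMonomial n f) (t : ℝ) : f (-t) = (-1) ^ n * f t := by
  have h := iterate_fdiff_neg t n f (n * t)
  rw [sub_self, hf.iterate_fdiff_eq, hf.iterate_fdiff_eq] at h
  have hn : (n.factorial : ℝ) ≠ 0 := by positivity
  apply mul_left_cancel₀ hn
  linear_combination h

lemma map_int_mul (hf : IsMonomial n f) (p : ℤ) (t : ℝ) : f (p * t) = p ^ n * f t := by
  obtain ⟨m, rfl | rfl⟩ := p.eq_nat_or_neg
  · exact_mod_cast hf.map_nat_mul m t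
  · rw [Int.cast_neg, Int.cast_natCast, neg_mul, hf.map_neg, hf.map_nat_mul, neg_pow]
    ring

lemma map_rat_mul (hf : IsMonomial n f) (r : ℚ) (t : ℝ) : f (r * t) = r ^ n * f t := by
  have hden : (r.den : ℝ) ≠ 0 := by positivity
  have hnum : f (r * t) = r.num ^ n * f (t / r.den) := by
    rw [← hf.map_int_mul, Rat.cast_def]
    ring_nf
  have hunit : f t = r.den ^ n * f (t / r.den) := by
    rw [← hf.map_nat_mul, mul_div_cancel₀ _ hden]
  rw [hnum, hunit, Rat.cast_def, div_pow]
  field_simp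

end IsMonomial

theorem stmt2 (n : ℕ) (f : ℝ → ℝ) (hf : IsMonomial n f) (h₀ : ℝ) (hh₀ : h₀ ≠ 0) :
    ∃ A : ℝ, ∀ r : ℚ, f (h₀ * (r : ℝ)) = A * (h₀ * (r : ℝ)) ^ n := by
  refine ⟨f h₀ / h₀ ^ n, fun r => ?_⟩
  rw [mul_comm h₀, hf.map_rat_mul]
  field_simp
  ring
end

section
/- Identity principle for monomials: if f, g : ℝ → ℝ are both n-monomials and there is a nonempty open interval I ⊆ ℝ with f(t) = g(t) for all t ∈ I, then f = g on all of ℝ. -/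
open Filter Topology

/-!
Put `φ = f - g` and fix a point `c` of the interval. For any `t`, choose a step `h` with
`t = c + N h` so small that `c, c + h, …, c + n h` all lie in the interval. Since `f` and `g` are
`n`-monomials, `Δ_h^n φ` is the constant `n! (f h - g h)`, and it vanishes at `c`, hence everywhere.
A function whose `n`-th difference vanishes along the progression `c + m h` and which vanishes at
its first `n` terms vanishes along all of it, in particular at `t`.
-/

lemma add_natCast_mul_add_self (x h : ℝ) (k : ℕ) :
    x + k * h + h = x + ((k + 1 : ℕ) : ℝ) * h := by
  push_cast
  ring

lemma iterate_fdiff_sub (h : ℝ) (f g : ℝ → ℝ) (j : ℕ) :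
    (fdiff h)^[j] (f - g) = (fdiff h)^[j] f - (fdiff h)^[j] g := by
  induction j with
  | zero => rfl
  | succ j ih =>
    simp only [Function.iterate_succ_apply', ih]
    funext x
    simp only [fdiff, Pi.sub_apply]
    ring

lemma iterate_fdiff_eq_zero_of_forall_le {φ : ℝ → ℝ} {h x : ℝ} {j : ℕ}
    (hφ : ∀ k ≤ j, φ (x + k * h) = 0) : (fdiff h)^[j] φ x = 0 := by
  induction j generalizing φ with
  | zero => simpa using hφ 0 le_rfl
  | succ j ih =>
    rw [Function.iterate_succ_apply]
    refine ih fun k hk => ?_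
    simp only [fdiff, add_natCast_mul_add_self, hφ k (by omega), hφ (k + 1) (by omega), sub_zero]

lemma eq_zero_of_iterate_fdiff_eq_zero {φ : ℝ → ℝ} {h x : ℝ} {n : ℕ}
    (hΔ : ∀ m : ℕ, (fdiff h)^[n] φ (x + m * h) = 0) (hφ : ∀ k < n, φ (x + k * h) = 0) :
    ∀ m : ℕ, φ (x + m * h) = 0 := by
  induction n generalizing φ with
  | zero => simpa using hΔ
  | succ n ih =>
    have hfdiff : ∀ m : ℕ, fdiff h φ (x + m * h) = 0 := by
      refine ih (fun m => by rw [← Function.iterate_succ_apply]; exact hΔ m) fun k hk => ?_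
      simp only [fdiff, add_natCast_mul_add_self, hφ k (by omega), hφ (k + 1) (by omega), sub_zero]
    intro m
    induction m with
    | zero => simpa using hφ 0 n.succ_pos
    | succ m ihm =>
      simpa only [fdiff, add_natCast_mul_add_self, ihm, sub_zero] using hfdiff m

lemma IsMonomial.iterate_fdiff_apply {n : ℕ} {f : ℝ → ℝ} (hf : IsMonomial n f) (h x : ℝ) :
    (fdiff h)^[n] f x = n.factorial * f h := by
  rw [← hf x h, ← mul_assoc, mul_one_div_cancel (by positivity), one_mul]

lemma exists_nat_mul_step_of_mem_nhds {s : Set ℝ} {c : ℝ} (hs : s ∈ 𝓝 c) (t : ℝ) (n : ℕ) :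
    ∃ h : ℝ, ∃ N : ℕ, t = c + N * h ∧ ∀ k ≤ n, c + k * h ∈ s := by
  have hsmall : ∀ k ∈ Finset.range (n + 1), ∀ᶠ N : ℕ in atTop, c + k * ((t - c) / N) ∈ s := by
    intro k _
    have hlim : Tendsto (fun N : ℕ => c + k * ((t - c) / N)) atTop (𝓝 c) := by
      simpa using tendsto_const_nhds.add
        (tendsto_const_nhds.mul (tendsto_const_div_atTop_nhds_zero_nat (t - c)))
    exact hlim.eventually hs
  obtain ⟨N, hN, hmem⟩ :=
    ((eventually_ne_atTop 0).and ((Filter.eventually_all_finset _).2 hsmall)).exists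
  refine ⟨(t - c) / N, N, ?_, fun k hk => hmem k (Finset.mem_range_succ_iff.2 hk)⟩
  field_simp
  ring

theorem stmt4 (n : ℕ) (f g : ℝ → ℝ) (hf : IsMonomial n f) (hg : IsMonomial n g)
    (a b : ℝ) (hab : a < b) (heq : ∀ t ∈ Set.Ioo a b, f t = g t) :
    ∀ t : ℝ, f t = g t := by
  intro t
  have hc : (a + b) / 2 ∈ Set.Ioo a b := ⟨by linarith, by linarith⟩
  obtain ⟨h, N, rfl, hmem⟩ := exists_nat_mul_step_of_mem_nhds (Ioo_mem_nhds hc.1 hc.2) t n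
  have hvanish : ∀ k ≤ n, (f - g) ((a + b) / 2 + k * h) = 0 := fun k hk =>
    sub_eq_zero.2 (heq _ (hmem k hk))
  have hconst : ∀ x, (fdiff h)^[n] (f - g) x = n.factorial * (f h - g h) := fun x => by
    rw [iterate_fdiff_sub, Pi.sub_apply, hf.iterate_fdiff_apply, hg.iterate_fdiff_apply, mul_sub]
  have hΔ : ∀ m : ℕ, (fdiff h)^[n] (f - g) ((a + b) / 2 + m * h) = 0 := fun m => by
    rw [hconst, ← hconst ((a + b) / 2)]
    exact iterate_fdiff_eq_zero_of_forall_le (by simpa using hvanish)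
  exact sub_eq_zero.1
    (eq_zero_of_iterate_fdiff_eq_zero hΔ (fun k hk => hvanish k hk.le) N)
end

section
/- If f : ℝ → ℝ is an n-monomial whose graph restricted to an open interval I not containing 0 agrees with t ↦ A t^n on I for some constant A, then f(t) = A t^n for all t ∈ ℝ. -/
/-!
For a monomial `f`, the `n`-th difference with step `h` is the constant `n! f(h)`. A difference
with step `m h` telescopes into `m` shifted differences with step `h`, and one with step `-h` is a
shifted `-Δ_h`; so `f (z h) = z^n f(h)` for integers `z`, hence `f (q h) = q^n f(h)` for rationals
`q`. Every real number is a rational multiple of a point of the interval, where `f` is `A t^n`.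
-/

open Finset Function
open scoped Nat

section FwdDiff

variable {M G : Type*} [AddCommGroup M] [AddCommGroup G]

lemma fwdDiff_nsmul (h : M) (g : M → G) (m : ℕ) :
    fwdDiff (m • h) g = ∑ j ∈ range m, fun y => fwdDiff h g (y + j • h) := by
  ext y
  simpa [fwdDiff, succ_nsmul, add_assoc] using
    (sum_range_sub (fun j => g (y + j • h)) m).symm

lemma fwdDiff_neg (h : M) (g : M → G) :
    fwdDiff (-h) g = (-1 : ℤ) • fun y => fwdDiff h g (y + -h) := by
  ext y
  simp [fwdDiff]

lemma fwdDiff_iter_neg (h : M) (g : M → G) (n : ℕ) (y : M) :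
    (fwdDiff (-h))^[n] g y = (-1 : ℤ) ^ n • (fwdDiff h)^[n] g (y + n • -h) := by
  induction n generalizing g with
  | zero => simp
  | succ n ih =>
    rw [iterate_succ_apply, fwdDiff_neg, fwdDiff_iter_const_smul, Pi.smul_apply, ih,
      fwdDiff_iter_comp_add, ← iterate_succ_apply, smul_smul, ← pow_succ', succ_nsmul,
      add_assoc]

lemma fwdDiff_iter_nsmul_of_forall_eq {h : M} {g : M → G} {n : ℕ} {c : G}
    (hg : ∀ x, (fwdDiff h)^[n] g x = c) (m : ℕ) (x : M) :
    (fwdDiff (m • h))^[n] g x = m ^ n • c := by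
  induction n generalizing g x with
  | zero => simpa using hg x
  | succ n ih =>
    have hg' : ∀ x, (fwdDiff h)^[n] (fwdDiff h g) x = c := fun x => by
      rw [← iterate_succ_apply, hg]
    simp only [iterate_succ_apply, fwdDiff_nsmul, fwdDiff_iter_finsetSum, Finset.sum_apply,
      fwdDiff_iter_comp_add, ih hg', sum_const, card_range, smul_smul, pow_succ']

lemma fwdDiff_iter_zsmul_of_forall_eq {h : M} {g : M → G} {n : ℕ} {c : G}
    (hg : ∀ x, (fwdDiff h)^[n] g x = c) (z : ℤ) (x : M) :
    (fwdDiff (z • h))^[n] g x = z ^ n • c := by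
  obtain ⟨m, rfl | rfl⟩ := z.eq_nat_or_neg
  · rw [natCast_zsmul, fwdDiff_iter_nsmul_of_forall_eq hg, ← Int.natCast_pow, natCast_zsmul]
  · rw [neg_smul, natCast_zsmul, fwdDiff_iter_neg, fwdDiff_iter_nsmul_of_forall_eq hg,
      ← natCast_zsmul, smul_smul, Int.natCast_pow, ← mul_pow, neg_one_mul]

end FwdDiff

lemma fdiff_eq_fwdDiff : fdiff = fwdDiff := rfl

namespace IsMonomial

variable {n : ℕ} {f : ℝ → ℝ}

lemma fwdDiff_iter_eq (hf : IsMonomial n f) (h x : ℝ) : (fwdDiff h)^[n] f x = n ! * f h := by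
  have hfx := hf x h
  rw [fdiff_eq_fwdDiff] at hfx
  field_simp at hfx
  exact hfx

lemma map_intCast_mul (hf : IsMonomial n f) (z : ℤ) (h : ℝ) : f (z * h) = z ^ n * f h := by
  have key := fwdDiff_iter_zsmul_of_forall_eq (hf.fwdDiff_iter_eq h) z 0
  rw [hf.fwdDiff_iter_eq, zsmul_eq_mul, zsmul_eq_mul] at key
  push_cast at key
  exact mul_left_cancel₀ (by positivity : (n ! : ℝ) ≠ 0) (by linear_combination key)

lemma map_ratCast_mul (hf : IsMonomial n f) (q : ℚ) (h : ℝ) : f (q * h) = q ^ n * f h := by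
  have hden : (q.den : ℝ) ≠ 0 := by positivity
  have hq : (q : ℝ) * h = q.num * (h / q.den) := by rw [Rat.cast_def]; ring
  have hh : f h = f ((q.den : ℤ) * (h / q.den)) := by push_cast; field_simp
  rw [hq, hh, hf.map_intCast_mul, hf.map_intCast_mul, Rat.cast_def, div_pow]
  push_cast
  field_simp

end IsMonomial

lemma exists_ratCast_mul_mem_of_isOpen {U : Set ℝ} (hU : IsOpen U) (hne : U.Nonempty)
    (t : ℝ) : ∃ q : ℚ, ∃ s ∈ U, t = q * s := by
  rcases eq_or_ne t 0 with rfl | ht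
  · obtain ⟨s, hs⟩ := hne
    exact ⟨0, s, hs, by simp⟩
  obtain ⟨w, hwU, hw0⟩ := (dense_compl_singleton (0 : ℝ)).inter_open_nonempty U hU hne
  have hV : IsOpen ((· * t) ⁻¹' (U ∩ {0}ᶜ)) :=
    (hU.inter isOpen_compl_singleton).preimage (continuous_mul_const t)
  obtain ⟨r, hrU, hr0⟩ :=
    Rat.denseRange_cast.exists_mem_open hV ⟨w / t, by simpa [ht, hwU] using hw0⟩
  refine ⟨r⁻¹, r * t, hrU, ?_⟩
  have hr : (r : ℝ) ≠ 0 := left_ne_zero_of_mul hr0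
  push_cast
  field_simp

theorem stmt5_general (n : ℕ) (f : ℝ → ℝ) (hf : IsMonomial n f) (A a b : ℝ) (hab : a < b)
    (heq : ∀ t ∈ Set.Ioo a b, f t = A * t ^ n) :
    ∀ t : ℝ, f t = A * t ^ n := by
  intro t
  obtain ⟨q, s, hs, rfl⟩ :=
    exists_ratCast_mul_mem_of_isOpen isOpen_Ioo (Set.nonempty_Ioo.2 hab) t
  rw [hf.map_ratCast_mul, heq s hs, mul_pow]
  ring

theorem stmt5 (n : ℕ) (f : ℝ → ℝ) (hf : IsMonomial n f) (A a b : ℝ) (hab : a < b)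
    (h0 : (0 : ℝ) ∉ Set.Ioo a b) (heq : ∀ t ∈ Set.Ioo a b, f t = A * t ^ n) :
    ∀ t : ℝ, f t = A * t ^ n :=
  stmt5_general n f hf A a b hab heq
end

section
/- If f : ℝ → ℝ is additive and there exist nonzero reals h, s with f(h)/h ≠ f(s)/s, then the set {f(t)/t : t ≠ 0} is unbounded above and unbounded below. -/
/-!
Along the line `h + ℚ s` an additive `f` is affine: `f t = b t + c` with `b = f s / s` and
`c = f h - b h`, and `c ≠ 0` exactly when `f h / h ≠ f s / s`. Hence `f t / t = b + c / t` there,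
and since `h + ℚ s` is dense, `t` can be taken arbitrarily close to `0` on either side, which
makes `c / t` arbitrarily large of either sign.
-/

lemma AddMonoidHom.map_ratCast_mul {K : Type*} [Field K] [CharZero K] (φ : K →+ K)
    (q : ℚ) (x : K) : φ (q * x) = q * φ x := by
  simpa only [Rat.cast_smul_eq_qsmul, smul_eq_mul] using map_ratCast_smul φ K K q x

lemma AddMonoidHom.map_sub_ratCast_mul {K : Type*} [Field K] [CharZero K] (φ : K →+ K)
    {h s : K} (hs : s ≠ 0) (q : ℚ) :
    φ (h - q * s) = φ s / s * (h - q * s) + (φ h - φ s / s * h) := by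
  rw [map_sub, φ.map_ratCast_mul]
  field_simp
  ring

lemma denseRange_sub_ratCast_mul {h s : ℝ} (hs : s ≠ 0) :
    DenseRange fun q : ℚ => h - q * s := by
  have hsurj : Function.Surjective fun x : ℝ => h - x * s := fun y =>
    ⟨(h - y) / s, by field_simp; ring⟩
  exact hsurj.denseRange.comp Rat.denseRange_cast (by fun_prop)

lemma Dense.exists_lt_div {S : Set ℝ} (hS : Dense S) {c : ℝ} (hc : c ≠ 0) (K : ℝ) :
    ∃ t ∈ S, t ≠ 0 ∧ K < c / t := by
  have hM : 0 < |K| + 1 := by positivity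
  have hKM : K < |K| + 1 := by linarith [le_abs_self K]
  rcases hc.lt_or_gt with hc | hc
  · obtain ⟨t, htS, ht₁, ht₂⟩ := hS.exists_between (div_neg_of_neg_of_pos hc hM)
    refine ⟨t, htS, ht₂.ne, ?_⟩
    rw [lt_div_iff_of_neg ht₂]
    rw [div_lt_iff₀ hM] at ht₁
    nlinarith
  · obtain ⟨t, htS, ht₁, ht₂⟩ := hS.exists_between (div_pos hc hM)
    refine ⟨t, htS, ht₁.ne', ?_⟩
    rw [lt_div_iff₀ ht₁]
    rw [lt_div_iff₀ hM] at ht₂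
    nlinarith

lemma Dense.exists_div_lt {S : Set ℝ} (hS : Dense S) {c : ℝ} (hc : c ≠ 0) (K : ℝ) :
    ∃ t ∈ S, t ≠ 0 ∧ c / t < K := by
  obtain ⟨t, htS, ht, hlt⟩ := hS.exists_lt_div (neg_ne_zero.2 hc) (-K)
  exact ⟨t, htS, ht, by rw [neg_div] at hlt; linarith⟩

theorem stmt9 (f : ℝ → ℝ) (hadd : ∀ x y : ℝ, f (x + y) = f x + f y)
    (h s : ℝ) (hh : h ≠ 0) (hs : s ≠ 0) (hne : f h / h ≠ f s / s) :
    ¬ BddAbove {y : ℝ | ∃ t : ℝ, t ≠ 0 ∧ y = f t / t} ∧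
    ¬ BddBelow {y : ℝ | ∃ t : ℝ, t ≠ 0 ∧ y = f t / t} := by
  set φ := AddMonoidHom.mk' f hadd
  set b := f s / s
  set c := f h - b * h
  have hc : c ≠ 0 := fun hc => hne (by rw [div_eq_iff hh]; linarith)
  have hS := denseRange_sub_ratCast_mul (h := h) hs
  have hline : ∀ t ∈ Set.range fun q : ℚ => h - q * s, t ≠ 0 → f t / t = b + c / t := by
    rintro _ ⟨q, rfl⟩ ht
    rw [show f _ = φ _ from rfl, φ.map_sub_ratCast_mul hs, add_div, mul_div_cancel_right₀ _ ht]
    rfl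
  constructor
  · refine not_bddAbove_iff.2 fun K => ?_
    obtain ⟨t, htS, ht, hlt⟩ := hS.exists_lt_div hc (K - b)
    exact ⟨f t / t, ⟨t, ht, rfl⟩, by rw [hline t htS ht]; linarith⟩
  · refine not_bddBelow_iff.2 fun K => ?_
    obtain ⟨t, htS, ht, hlt⟩ := hS.exists_div_lt hc (K - b)
    exact ⟨f t / t, ⟨t, ht, rfl⟩, by rw [hline t htS ht]; linarith⟩
end

section
/- Darboux-type theorem: if f : ℝ → ℝ satisfies Δ_h^{N+1} f(x) = 0 for all x, h ∈ ℝ and f is bounded on some nonempty open interval (a,b), then f is an ordinary polynomial, f(x) = a₀ + a₁ x + ⋯ + a_N x^N. -/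
/-!
By Newton's forward-difference formula, `f` is a polynomial of degree `≤ N` on every arithmetic
progression; comparing the progressions of steps `1` and `1 / q` shows that `f` is a polynomial
along every rational line `y + ℚ h`. Fixing `x` and interpolating at the nodes `0, …, N`, we get
`f (s + t x) = F (s, t)` for rational `s, t`, with `F` a real polynomial in two variables.
Boundedness of `f` on `(a, b)` and density of `ℚ` bound `F` on the strip `a < u + t x < b`, so
`t ↦ F (v - t x, t)` is a bounded polynomial, hence constant. This gives `f x = F (x, 0)`, the
Lagrange interpolant of `f` at `0, …, N` evaluated at `x`.
-/

open Finset Polynomial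

lemma fwdDiff_iter_eq_zero_of_lt {M G : Type*} [AddCommMonoid M] [AddCommGroup G] {h : M}
    {f : M → G} {N k : ℕ} (hf : (fwdDiff h)^[N + 1] f = 0) (hk : N < k) :
    (fwdDiff h)^[k] f = 0 := by
  obtain ⟨j, rfl⟩ := Nat.exists_eq_add_of_lt hk
  rw [show N + j + 1 = j + (N + 1) by omega, Function.iterate_add_apply, hf]
  exact Function.iterate_fixed (fwdDiff_const h 0) j

lemma fwdDiff_iter_comp_add_addMonoidHom {M M' G : Type*} [AddCommMonoid M]
    [AddCommMonoid M'] [AddCommGroup G] (f : M → G) (φ : M' →+ M) (y : M) (h : M') (n : ℕ)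
    (r : M') : (fwdDiff h)^[n] (fun r => f (y + φ r)) r = (fwdDiff (φ h))^[n] f (y + φ r) := by
  simp [fwdDiff_iter_eq_sum_shift, add_assoc]

lemma Polynomial.eq_of_eval_natCast_eq {K : Type*} [Field K] [CharZero K] {P Q : K[X]}
    (h : ∀ n : ℕ, P.eval (n : K) = Q.eval (n : K)) : P = Q :=
  eq_of_infinite_eval_eq P Q <| (Set.infinite_range_of_injective Nat.cast_injective).mono <|
    Set.range_subset_iff.2 h

section PolynomialAlongLines

variable {M K : Type*} [Field K] [CharZero K]

theorem exists_poly_eval_nsmul_eq [AddCommMonoid M] {h : M} {f : M → K} {N : ℕ}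
    (hf : (fwdDiff h)^[N + 1] f = 0) (y : M) :
    ∃ P : K[X], P.natDegree ≤ N ∧ ∀ n : ℕ, f (y + n • h) = P.eval (n : K) := by
  refine ⟨∑ k ∈ range (N + 1), C ((fwdDiff h)^[k] f y / k.factorial) * descPochhammer K k,
    natDegree_sum_le_of_forall_le _ _ fun k hk => ?_, fun n => ?_⟩
  · exact (natDegree_C_mul_le _ _).trans
      ((descPochhammer_natDegree K k).trans_le (Nat.lt_succ_iff.1 (mem_range.1 hk)))
  · have hvanish : ∀ k ∉ range (min n N + 1), (n.choose k : K) * (fwdDiff h)^[k] f y = 0 := by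
      intro k hk
      rcases lt_or_ge n k with hnk | hkn
      · rw [Nat.choose_eq_zero_of_lt hnk, Nat.cast_zero, zero_mul]
      · rw [fwdDiff_iter_eq_zero_of_lt hf (by rw [mem_range] at hk; omega), Pi.zero_apply,
          mul_zero]
    have hsub : ∀ m, min n N ≤ m → range (min n N + 1) ⊆ range (m + 1) := fun m hm =>
      range_subset_range.2 (by omega)
    rw [shift_eq_sum_fwdDiff_iter h f n y, eval_finsetSum]
    simp only [nsmul_eq_mul]
    rw [← sum_subset (hsub n (min_le_left n N)) fun k _ => hvanish k,
      sum_subset (hsub N (min_le_right n N)) fun k _ => hvanish k]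
    refine sum_congr rfl fun k _ => ?_
    rw [eval_mul, eval_C, Nat.cast_choose_eq_descPochhammer_div]
    ring

theorem exists_poly_eval_ratCast_eq {g : ℚ → K} {N : ℕ}
    (hg : ∀ h : ℚ, (fwdDiff h)^[N + 1] g = 0) :
    ∃ P : K[X], P.natDegree ≤ N ∧ ∀ r : ℚ, g r = P.eval (r : K) := by
  obtain ⟨P, hPdeg, hP⟩ := exists_poly_eval_nsmul_eq (hg 1) 0
  refine ⟨P, hPdeg, fun r => ?_⟩
  set a := r.num.toNat
  set b := (-r.num).toNat
  set q := r.den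
  obtain ⟨Q, -, hQ⟩ := exists_poly_eval_nsmul_eq (hg (1 / q)) (-(b / q))
  have hq : (q : ℚ) ≠ 0 := Nat.cast_ne_zero.2 r.den_nz
  -- the grid `-(b / q) + ℕ • (1 / q)` contains `ℕ`, on which `Q` rescaled agrees with `P`
  have hQP : Q.comp (C (q : K) * X + C (b : K)) = P := by
    refine eq_of_eval_natCast_eq fun n => ?_
    have := hQ (q * n + b)
    rw [show -(b / q : ℚ) + (q * n + b : ℕ) • (1 / q) = 0 + n • 1 by
      rw [nsmul_eq_mul, nsmul_eq_mul]; push_cast; field_simp; ring] at this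
    rw [← hP, this]
    simp
  have hrQ : (q : ℚ) * r + b = a := by
    rw [mul_comm, Rat.mul_den_eq_num, ← Int.toNat_sub_toNat_neg r.num]; push_cast; ring
  have hr : (q : K) * r + b = a := by exact_mod_cast congrArg (Rat.cast : ℚ → K) hrQ
  have := hQ a
  rw [show -(b / q : ℚ) + a • (1 / q) = r by
    rw [nsmul_eq_mul, ← hrQ]; field_simp; ring] at this
  rw [this, ← hQP, eval_comp]
  simp [hr]

variable [AddCommGroup M] [Module ℚ M]

theorem exists_poly_eval_qsmul_eq {f : M → K} {N : ℕ}
    (hf : ∀ h : M, (fwdDiff h)^[N + 1] f = 0) (y h : M) :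
    ∃ P : K[X], P.natDegree ≤ N ∧ ∀ r : ℚ, f (y + r • h) = P.eval (r : K) :=
  exists_poly_eval_ratCast_eq fun r => funext fun r' => by
    simpa [hf] using fwdDiff_iter_comp_add_addMonoidHom f
      (LinearMap.toSpanSingleton ℚ M h).toAddMonoidHom y r (N + 1) r'

theorem eq_sum_eval_lagrangeBasis_mul {f : M → K} {N : ℕ}
    (hf : ∀ h : M, (fwdDiff h)^[N + 1] f = 0) (u w : M) (s : ℚ) :
    f (s • u + w) = ∑ i ∈ range (N + 1),
      (Lagrange.basis (range (N + 1)) (Nat.cast : ℕ → K) i).eval (s : K) *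
        f ((i : ℚ) • u + w) := by
  obtain ⟨P, hPdeg, hP⟩ := exists_poly_eval_qsmul_eq hf w u
  have hinj : Set.InjOn (Nat.cast : ℕ → K) (range (N + 1)) := Nat.cast_injective.injOn
  have hdeg : P.degree < (range (N + 1)).card := by
    rw [card_range]
    exact (degree_le_of_natDegree_le hPdeg).trans_lt (by exact_mod_cast N.lt_succ_self)
  rw [add_comm (s • u), hP, Lagrange.eq_interpolate hinj hdeg, Lagrange.interpolate_apply,
    eval_finsetSum]
  refine sum_congr rfl fun i _ => ?_
  rw [eval_mul, eval_C, mul_comm, add_comm _ w, hP, Rat.cast_natCast]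

end PolynomialAlongLines

lemma Polynomial.eval_eq_of_forall_abs_le {p : ℝ[X]} {M : ℝ} (hp : ∀ t, |p.eval t| ≤ M)
    (t t' : ℝ) : p.eval t = p.eval t' := by
  have hdeg : p.degree ≤ 0 := p.isBoundedUnder_abs_atTop_iff.1
    ⟨M, Filter.eventually_map.2 (Filter.Eventually.of_forall hp)⟩
  rw [eq_C_of_degree_le_zero hdeg, eval_C, eval_C]

lemma abs_le_of_forall_ratCast_abs_le {g : ℝ → ℝ} (hg : Continuous g) {U : Set ℝ}
    (hU : IsOpen U) {M : ℝ} (h : ∀ q : ℚ, (q : ℝ) ∈ U → |g q| ≤ M) :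
    ∀ y ∈ U, |g y| ≤ M := by
  have hclosed : IsClosed {y | |g y| ≤ M} := isClosed_le (by fun_prop) continuous_const
  refine (Rat.denseRange_cast.open_subset_closure_inter hU).trans (closure_minimal ?_ hclosed)
  rintro _ ⟨hy, q, rfl⟩
  exact h q hy

theorem eq_sum_eval_mul_eval_zero_of_abs_le {f : ℝ → ℝ} {a b M : ℝ} (hab : a < b)
    (hbd : ∀ y ∈ Set.Ioo a b, |f y| ≤ M) {ι : Type*} (S : Finset ι) (L Q : ι → ℝ[X]) {x : ℝ}
    (hrep : ∀ s t : ℚ, f (s + t * x) = ∑ i ∈ S, (L i).eval ↑s * (Q i).eval ↑t) :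
    f x = ∑ i ∈ S, (L i).eval x * (Q i).eval 0 := by
  set F : ℝ → ℝ → ℝ := fun u t => ∑ i ∈ S, (L i).eval u * (Q i).eval t with hF
  have hbd_rat : ∀ t : ℚ, ∀ u ∈ Set.Ioo (a - t * x) (b - t * x), |F u t| ≤ M := by
    intro t
    refine abs_le_of_forall_ratCast_abs_le (by fun_prop) isOpen_Ioo fun s hs => ?_
    simp only [hF]
    rw [← hrep]
    exact hbd _ ⟨by linarith [hs.1], by linarith [hs.2]⟩
  have hconst : ∀ v ∈ Set.Ioo a b, F (v - x) 1 = F v 0 := by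
    intro v hv
    set p : ℝ[X] := ∑ i ∈ S, (L i).comp (C v - X * C x) * Q i
    have hp : ∀ t, p.eval t = F (v - t * x) t := fun t => by
      simp only [p, hF, eval_finsetSum, eval_mul, eval_comp, eval_sub, eval_C, eval_X]
    have hpbd : ∀ t, |p.eval t| ≤ M := fun t =>
      abs_le_of_forall_ratCast_abs_le p.continuous isOpen_univ (fun t _ => by
        rw [hp]; exact hbd_rat t _ ⟨by linarith [hv.1], by linarith [hv.2]⟩) t trivial
    simpa [hp] using eval_eq_of_forall_abs_le hpbd 1 0
  have hpoly : ∑ i ∈ S, (L i).comp (X - C x) * C ((Q i).eval 1) =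
      ∑ i ∈ S, L i * C ((Q i).eval 0) := by
    refine eq_of_infinite_eval_eq _ _ ((Set.Ioo_infinite hab).mono fun v hv => ?_)
    simpa only [hF, Set.mem_ofPred_eq, eval_finsetSum, eval_mul, eval_comp, eval_sub, eval_X,
      eval_C] using hconst v hv
  have := congrArg (eval x) hpoly
  simp only [eval_finsetSum, eval_mul, eval_comp, eval_sub, eval_X, eval_C, sub_self] at this
  rw [← this, ← Rat.cast_zero, ← Rat.cast_one]
  simpa using hrep 0 1

theorem eq_eval_interpolate_of_abs_le {f : ℝ → ℝ} {N : ℕ}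
    (hf : ∀ h : ℝ, (fwdDiff h)^[N + 1] f = 0) {a b M : ℝ} (hab : a < b)
    (hbd : ∀ y ∈ Set.Ioo a b, |f y| ≤ M) (x : ℝ) :
    f x = (Lagrange.interpolate (range (N + 1)) (Nat.cast : ℕ → ℝ) fun i => f i).eval x := by
  choose Q _ hQ using fun i : ℕ => exists_poly_eval_qsmul_eq hf (i : ℝ) x
  have hrep : ∀ s t : ℚ, f (s + t * x) = ∑ i ∈ range (N + 1),
      (Lagrange.basis (range (N + 1)) (Nat.cast : ℕ → ℝ) i).eval ↑s * (Q i).eval ↑t := by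
    intro s t
    simpa [Rat.smul_def, ← hQ] using eq_sum_eval_lagrangeBasis_mul hf 1 (t • x) s
  rw [eq_sum_eval_mul_eval_zero_of_abs_le hab hbd _ _ Q hrep, Lagrange.interpolate_apply,
    eval_finsetSum]
  refine sum_congr rfl fun i _ => ?_
  rw [eval_mul, eval_C, mul_comm]
  congr 1
  simpa using (hQ i 0).symm

theorem stmt18 (N : ℕ) (f : ℝ → ℝ)
    (hf : ∀ x h : ℝ, ((fdiff h)^[N + 1] f) x = 0)
    (a b : ℝ) (hab : a < b) (M : ℝ) (hbd : ∀ x ∈ Set.Ioo a b, |f x| ≤ M) :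
    ∃ c : Fin (N + 1) → ℝ, ∀ x : ℝ, f x = ∑ i : Fin (N + 1), c i * x ^ (i : ℕ) := by
  have hf' : ∀ h : ℝ, (fwdDiff h)^[N + 1] f = 0 := fun h => funext fun x => hf x h
  set P : ℝ[X] := Lagrange.interpolate (range (N + 1)) (Nat.cast : ℕ → ℝ) fun i => f i
  have hdeg : P.natDegree ≤ N := natDegree_le_of_degree_le <| by
    have hinj : Set.InjOn (Nat.cast : ℕ → ℝ) (range (N + 1)) := Nat.cast_injective.injOn
    simpa only [card_range, Nat.add_sub_cancel] using
      Lagrange.degree_interpolate_le (fun i : ℕ => f i) hinj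
  exact ⟨fun i => P.coeff i, fun x => by
    rw [eq_eval_interpolate_of_abs_le hf' hab hbd x, eval_eq_sum_range' (Nat.lt_succ_of_le hdeg),
      ← Fin.sum_univ_eq_sum_range (fun i => P.coeff i * x ^ i)]⟩
end

section
/- If f : ℝ → ℝ is a polynomial function (Δ_h^{N+1} f = 0 for all h) with monomial decomposition f = f₀ + f₁ + ⋯ + f_N, and the top monomial f_N is discontinuous, then f is unbounded on every interval [a,b] with a < b. -/
open Function Finset

section FiniteDifferences

@[simp] lemma fdiff_zero_left (f : ℝ → ℝ) : fdiff 0 f = 0 := by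
  funext x; simp [fdiff]

@[simp] lemma fdiff_zero_right (h : ℝ) : fdiff h 0 = 0 := by
  funext x; simp [fdiff]

@[simp] lemma iterate_fdiff_zero (h : ℝ) (n : ℕ) : (fdiff h)^[n] 0 = 0 :=
  iterate_fixed (fdiff_zero_right h) n

lemma commute_fdiff (a b : ℝ) : Function.Commute (fdiff a) (fdiff b) := by
  intro f; funext x; simp only [fdiff]; ring_nf

lemma fdiff_add (a b : ℝ) (g : ℝ → ℝ) (x : ℝ) :
    fdiff (a + b) g x = fdiff a g x + fdiff b g x + fdiff a (fdiff b g) x := by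
  simp only [fdiff]; ring_nf

lemma periodic_iterate_fdiff {w : ℝ} {k : ℕ} {ψ : ℝ → ℝ}
    (hvan : ∀ x, (fdiff w)^[k + 1] ψ x = 0) : Periodic ((fdiff w)^[k] ψ) w := fun x => by
  simpa [iterate_succ_apply', fdiff, sub_eq_zero] using hvan x

lemma abs_iterate_fdiff_le {h C x : ℝ} {g : ℝ → ℝ} {n : ℕ}
    (hC : ∀ y, |y - x| ≤ n * |h| → |g y| ≤ C) : |(fdiff h)^[n] g x| ≤ 2 ^ n * C := by
  induction n generalizing g C with
  | zero => simpa using hC x (by simp)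
  | succ n ih =>
    rw [iterate_succ_apply, pow_succ, mul_assoc]
    refine ih fun y hy => ?_
    have hy' : |y + h - x| ≤ (n + 1) * |h| := by
      calc |y + h - x| ≤ |y - x| + |h| := by rw [add_sub_right_comm]; exact abs_add_le _ _
        _ ≤ (n + 1) * |h| := by linarith
    have h₁ := hC (y + h) (by exact_mod_cast hy')
    have h₂ := hC y (by push_cast; nlinarith [abs_nonneg h])
    calc |fdiff h g y| ≤ |g (y + h)| + |g y| := abs_sub _ _
      _ ≤ 2 * C := by linarith

noncomputable def shiftₗ (h : ℝ) : Module.End ℝ (ℝ → ℝ) := LinearMap.funLeft ℝ ℝ (· + h)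

lemma iterate_fdiff_eq_pow (h : ℝ) (n : ℕ) : (fdiff h)^[n] = ⇑((shiftₗ h - 1) ^ n) := by
  rw [Module.End.coe_pow]; rfl

lemma shiftₗ_nat_mul (w : ℝ) (m : ℕ) : shiftₗ (m * w) = shiftₗ w ^ m := by
  induction m with
  | zero => ext f x; simp [shiftₗ]
  | succ m ih =>
    rw [pow_succ, ← ih]
    ext f x
    simp only [shiftₗ, Module.End.mul_apply, LinearMap.funLeft_apply]
    push_cast; ring_nf

/-- Telescoping: `shiftₗ (m w) - 1 = (∑_{i<m} shiftₗ w ^ i) (shiftₗ w - 1)`, and these translations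
fix the `w`-periodic function `Δ_w^k ψ`. -/
theorem iterate_fdiff_nat_mul {w : ℝ} {k : ℕ} {ψ : ℝ → ℝ}
    (hper : Periodic ((fdiff w)^[k] ψ) w) (m : ℕ) :
    (fdiff (m * w))^[k] ψ = (m : ℝ) ^ k • (fdiff w)^[k] ψ := by
  set S := ∑ i ∈ range m, shiftₗ w ^ i
  set φ := (fdiff w)^[k] ψ
  have hS : S φ = (m : ℝ) • φ := by
    have hfix : ∀ i : ℕ, (shiftₗ w ^ i) φ = φ := fun i => by
      rw [← shiftₗ_nat_mul]; funext x; exact hper.nat_mul i x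
    simp only [S, LinearMap.sum_apply, hfix, sum_const, card_range]
    exact (Nat.cast_smul_eq_nsmul ℝ m φ).symm
  have hSk : ∀ j : ℕ, (S ^ j) φ = (m : ℝ) ^ j • φ := fun j => by
    induction j with
    | zero => simp
    | succ j ih => rw [pow_succ, Module.End.mul_apply, hS, map_smul, ih, smul_smul, ← pow_succ']
  have hcomm : Commute S (shiftₗ w - 1) :=
    Commute.sum_left _ _ _ fun i _ => ((Commute.refl _).sub_right (Commute.one_right _)).pow_left i
  rw [iterate_fdiff_eq_pow, shiftₗ_nat_mul, ← geom_sum_mul, hcomm.mul_pow, Module.End.mul_apply,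
    ← iterate_fdiff_eq_pow, hSk]

end FiniteDifferences

section BoundedSolutions

lemma eq_zero_of_forall_nat_mul_abs_le {a B : ℝ} (h : ∀ m : ℕ, (m : ℝ) * |a| ≤ B) : a = 0 := by
  by_contra ha
  obtain ⟨m, hm⟩ := exists_nat_gt (B / |a|)
  rw [div_lt_iff₀ (abs_pos.mpr ha)] at hm
  linarith [h m]

lemma abs_le_of_periodic_rat_mul {ψ : ℝ → ℝ} {h r C : ℝ} (hh : h ≠ 0) (hr : 0 < r)
    (hper : ∀ q : ℚ, Periodic ψ (q * h)) (hC : ∀ y, |y| ≤ r → |ψ y| ≤ C) (x : ℝ) :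
    |ψ x| ≤ C := by
  have hrh : 0 < r / |h| := div_pos hr (abs_pos.mpr hh)
  obtain ⟨q, hq₁, hq₂⟩ := exists_rat_btwn (show x / h - r / |h| < x / h + r / |h| by linarith)
  rw [← hper (-q) x]
  apply hC
  have hq : |x / h - q| ≤ r / |h| := abs_le.mpr ⟨by linarith, by linarith⟩
  calc |x + ((-q : ℚ) : ℝ) * h| = |h| * |x / h - q| := by
        rw [← abs_mul]; congr 1; push_cast; field_simp; ring
    _ ≤ |h| * (r / |h|) := by gcongr
    _ = r := by field_simp

/-- Were `Δ_w^n ψ` nonzero, the scaling `Δ_{mw}^n ψ = m^n Δ_w^n ψ` would make it unbounded. -/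
theorem fdiff_eq_zero_of_bounded {ψ : ℝ → ℝ} {C : ℝ} (hC : ∀ x, |ψ x| ≤ C) {n : ℕ}
    (hvan : ∀ w x, (fdiff w)^[n + 1] ψ x = 0) (w x : ℝ) : fdiff w ψ x = 0 := by
  induction n with
  | zero => simpa using hvan w x
  | succ n ih =>
    refine ih fun w x => eq_zero_of_forall_nat_mul_abs_le (B := 2 ^ (n + 1) * C) fun m => ?_
    have hbound : |(fdiff (m * w))^[n + 1] ψ x| ≤ 2 ^ (n + 1) * C :=
      abs_iterate_fdiff_le fun y _ => hC y
    rw [iterate_fdiff_nat_mul (periodic_iterate_fdiff (hvan w)), Pi.smul_apply, smul_eq_mul,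
      abs_mul, abs_pow, Nat.abs_cast] at hbound
    have hm : (m : ℝ) ≤ (m : ℝ) ^ (n + 1) := by exact_mod_cast Nat.le_self_pow n.succ_ne_zero m
    nlinarith [abs_nonneg ((fdiff w)^[n + 1] ψ x)]

/-- `e t = E t - t E 1` is additive and vanishes on `ℚ`, so it has every rational period and is
bounded; then `e (m t) = m e t` forces `e = 0`. -/
theorem eq_mul_of_map_add_of_bounded {E : ℝ → ℝ} {C : ℝ} (hadd : ∀ a b, E (a + b) = E a + E b)
    (hC : ∀ t, |t| ≤ 1 → |E t| ≤ C) (t : ℝ) : E t = t * E 1 := by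
  let e : ℝ →+ ℝ := AddMonoidHom.mk' (fun t => E t - t * E 1) fun a b => by simp only [hadd]; ring
  have hrat : ∀ q : ℚ, e q = 0 := fun q => by
    simpa [e] using map_ratCast_smul e ℝ ℝ q 1
  have hper : ∀ q : ℚ, Periodic e (q * 1) := fun q x => by rw [mul_one, map_add, hrat, add_zero]
  have hbdd : ∀ x, |e x| ≤ C + |E 1| :=
    abs_le_of_periodic_rat_mul one_ne_zero one_pos hper fun y hy =>
      calc |E y - y * E 1| ≤ |E y| + |y| * |E 1| := by rw [← abs_mul]; exact abs_sub _ _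
        _ ≤ C + 1 * |E 1| := by gcongr; exact hC y hy
        _ = C + |E 1| := by ring
  have he : e t = 0 := eq_zero_of_forall_nat_mul_abs_le fun m => by
    rw [← Nat.abs_cast m, ← abs_mul, ← nsmul_eq_mul, ← map_nsmul]; exact hbdd _
  simpa [e, sub_eq_zero] using he

end BoundedSolutions

def LocallyBounded (g : ℝ → ℝ) : Prop :=
  ∀ R, ∃ C, ∀ x, |x| ≤ R → |g x| ≤ C

namespace LocallyBounded

variable {g : ℝ → ℝ}

lemma iterate_fdiff (hg : LocallyBounded g) (h : ℝ) (n : ℕ) :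
    LocallyBounded ((fdiff h)^[n] g) := fun R => by
  obtain ⟨C, hC⟩ := hg (R + n * |h|)
  refine ⟨2 ^ n * C, fun x hx => abs_iterate_fdiff_le fun y hy => hC y ?_⟩
  linarith [abs_sub_abs_le_abs_sub y x]

lemma fdiff (hg : LocallyBounded g) (h : ℝ) : LocallyBounded (fdiff h g) := by
  simpa using hg.iterate_fdiff h 1

end LocallyBounded

/-- The differences `Δ_h^n g` have every rational multiple of `h` as a period (by the scaling law
applied to `h / m`), so local boundedness makes them globally bounded, hence constant. -/
theorem fdiff_iterate_fdiff_eq_zero {g : ℝ → ℝ} (hg : LocallyBounded g) {n : ℕ}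
    (hvan : ∀ w x, (fdiff w)^[n + 1] g x = 0) (h u x : ℝ) :
    fdiff u ((fdiff h)^[n] g) x = 0 := by
  rcases eq_or_ne h 0 with rfl | hh
  · cases n with
    | zero => simpa using hvan u x
    | succ n => simp [iterate_succ_apply']
  set ψ := (fdiff h)^[n] g
  have hper_div : ∀ m : ℕ, m ≠ 0 → Periodic ψ (h / m) := fun m hm => by
    have hper := periodic_iterate_fdiff (hvan (h / m))
    have hψ : ψ = (m : ℝ) ^ n • (fdiff (h / m))^[n] g := by
      rw [← iterate_fdiff_nat_mul hper, mul_div_cancel₀ _ (Nat.cast_ne_zero.mpr hm)]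
    rw [hψ]; exact hper.smul _
  have hper : ∀ q : ℚ, Periodic ψ (q * h) := fun q => by
    rw [show (q : ℝ) * h = q.num * (h / q.den) by rw [Rat.cast_def]; ring]
    exact (hper_div q.den q.den_nz).int_mul q.num
  obtain ⟨C, hC⟩ := hg.iterate_fdiff h n 1
  refine fdiff_eq_zero_of_bounded (n := n) (abs_le_of_periodic_rat_mul hh one_pos hper hC)
    (fun w y => ?_) u x
  rw [(commute_fdiff w h).iterate_iterate (n + 1) n g, show (fdiff w)^[n + 1] g = 0 from
    funext (hvan w), iterate_fdiff_zero, Pi.zero_apply]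

/-- Inductively `Δ_1^n Δ_h g` is constant, and `h ↦ Δ_h Δ_1^n g (0)` is
additive because the mixed difference `Δ_a Δ_b Δ_1^n g` vanishes; Cauchy's equation does the rest. -/
theorem iterate_fdiff_eq_pow_mul {n : ℕ} {g : ℝ → ℝ} (hg : LocallyBounded g)
    (hvan : ∀ h x, (fdiff h)^[n + 1] g x = 0) (h x : ℝ) :
    (fdiff h)^[n] g x = h ^ n * (fdiff 1)^[n] g 0 := by
  induction n generalizing g h x with
  | zero =>
    have hx := hvan (-x) x
    simp only [zero_add, iterate_one, fdiff, add_neg_cancel] at hx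
    simp only [iterate_zero, id_eq, pow_zero, one_mul]
    linarith
  | succ n ih =>
    have ih' : ∀ u k y, (fdiff k)^[n] (fdiff u g) y = k ^ n * (fdiff 1)^[n] (fdiff u g) 0 :=
      fun u => ih (hg.fdiff u) fun k y => by
        rw [← (commute_fdiff u k).iterate_right (n + 1) g]
        exact fdiff_iterate_fdiff_eq_zero hg hvan k u y
    set φ := (fdiff 1)^[n] g
    have hφ : ∀ u, (fdiff 1)^[n] (fdiff u g) = fdiff u φ := fun u =>
      ((commute_fdiff u 1).iterate_right n g).symm
    have hadd : ∀ a b, fdiff (a + b) φ 0 = fdiff a φ 0 + fdiff b φ 0 := fun a b => by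
      have hmixed : fdiff a (fdiff b φ) 0 = 0 := by
        rw [← hφ b]; simp only [fdiff]; rw [ih' b 1, ih' b 1]; ring
      rw [fdiff_add, hmixed, add_zero]
    obtain ⟨C, hC⟩ := hg.iterate_fdiff 1 n 1
    have hlin : ∀ t, fdiff t φ 0 = t * fdiff 1 φ 0 :=
      eq_mul_of_map_add_of_bounded hadd (C := 2 * C) fun t ht =>
      calc |fdiff t φ 0| ≤ |φ (0 + t)| + |φ 0| := abs_sub _ _
        _ ≤ 2 * C := by linarith [hC (0 + t) (by simpa using ht), hC 0 (by simp)]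
    rw [iterate_succ_apply, ih', hφ, hlin, iterate_succ_apply']
    ring

namespace IsMonomial

variable {k : ℕ} {P : ℝ → ℝ}

lemma iterate_fdiff (hP : IsMonomial k P) (h x : ℝ) : (fdiff h)^[k] P x = k.factorial * P h := by
  rw [← hP x h, ← mul_assoc, mul_one_div_cancel (Nat.cast_ne_zero.mpr k.factorial_ne_zero),
    one_mul]

lemma iterate_fdiff_eq_zero (hP : IsMonomial k P) {j : ℕ} (hkj : k < j) (h x : ℝ) :
    (fdiff h)^[j] P x = 0 := by
  obtain ⟨i, rfl⟩ := Nat.exists_eq_add_of_lt hkj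
  have hconst : fdiff h ((fdiff h)^[k] P) = 0 := funext fun y => by
    simp only [fdiff, hP.iterate_fdiff, sub_self, Pi.zero_apply]
  rw [add_assoc, add_comm, iterate_add_apply, iterate_succ_apply, hconst, iterate_fdiff_zero,
    Pi.zero_apply]

lemma apply_nat_mul (hP : IsMonomial k P) (m : ℕ) (h : ℝ) : P (m * h) = m ^ k * P h := by
  have hper : Periodic ((fdiff h)^[k] P) h := fun x => by rw [hP.iterate_fdiff, hP.iterate_fdiff]
  have hscale := congrFun (iterate_fdiff_nat_mul hper m) 0
  rw [Pi.smul_apply, smul_eq_mul, hP.iterate_fdiff, hP.iterate_fdiff] at hscale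
  apply mul_left_cancel₀ (Nat.cast_ne_zero.mpr k.factorial_ne_zero : (k.factorial : ℝ) ≠ 0)
  linear_combination hscale

lemma locallyBounded (hP : IsMonomial k P) {δ B : ℝ} (hδ : 0 < δ)
    (hB : ∀ h, |h| ≤ δ → |P h| ≤ B) : LocallyBounded P := fun R => by
  obtain ⟨m, hm⟩ := exists_nat_gt (R / δ)
  have hm1 : (0 : ℝ) < m + 1 := by positivity
  refine ⟨((m : ℝ) + 1) ^ k * B, fun x hx => ?_⟩
  have hx' : |x / (m + 1)| ≤ δ := by
    rw [abs_div, abs_of_pos hm1, div_le_iff₀ hm1]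
    rw [div_lt_iff₀ hδ] at hm
    nlinarith
  have hscale := hP.apply_nat_mul (m + 1) (x / (m + 1))
  push_cast at hscale
  rw [mul_div_cancel₀ _ hm1.ne'] at hscale
  rw [hscale, abs_mul, abs_pow, abs_of_pos hm1]
  exact mul_le_mul_of_nonneg_left (hB _ hx') (by positivity)

lemma apply_eq_pow_mul (hP : IsMonomial k P) (hb : LocallyBounded P) (h : ℝ) :
    P h = h ^ k * P 1 := by
  have hpow := iterate_fdiff_eq_pow_mul hb (fun h x => hP.iterate_fdiff_eq_zero k.lt_succ_self h x)
    h 0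
  rw [hP.iterate_fdiff, hP.iterate_fdiff] at hpow
  apply mul_left_cancel₀ (Nat.cast_ne_zero.mpr k.factorial_ne_zero : (k.factorial : ℝ) ≠ 0)
  linear_combination hpow

theorem continuous (hP : IsMonomial k P) (hb : LocallyBounded P) : Continuous P := by
  rw [funext (hP.apply_eq_pow_mul hb)]
  fun_prop

end IsMonomial

theorem iterate_fdiff_sum_monomials {N : ℕ} {F : ℕ → ℝ → ℝ}
    (hmono : ∀ k ≤ N, IsMonomial k (F k)) (h x : ℝ) :
    (fdiff h)^[N] (∑ k ∈ range (N + 1), F k) x = N.factorial * F N h := by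
  rw [iterate_fdiff_eq_pow, map_sum, Finset.sum_apply,
    Finset.sum_eq_single_of_mem N (self_mem_range_succ N)]
  · rw [← iterate_fdiff_eq_pow, (hmono N le_rfl).iterate_fdiff]
  · intro k hk hkN
    have hkN' : k < N := lt_of_le_of_ne (mem_range_succ_iff.mp hk) hkN
    rw [← iterate_fdiff_eq_pow, (hmono k hkN'.le).iterate_fdiff_eq_zero hkN']

theorem stmt19_general (N : ℕ) (f : ℝ → ℝ)
    (F : ℕ → (ℝ → ℝ)) (hmono : ∀ k ≤ N, IsMonomial k (F k))
    (hdecomp : ∀ x : ℝ, f x = ∑ k ∈ Finset.range (N + 1), F k x)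
    (hdisc : ¬ Continuous (F N)) :
    ∀ a b : ℝ, a < b → ∀ M : ℝ, ∃ x ∈ Set.Icc a b, M < |f x| := by
  intro a b hab M
  by_contra! hbdd
  have hP := hmono N le_rfl
  refine hdisc (hP.continuous (hP.locallyBounded (δ := (b - a) / (2 * (N + 1)))
    (B := 2 ^ N * M) (by apply div_pos <;> linarith) fun h hh => ?_))
  rw [le_div_iff₀ (by positivity)] at hh
  have hf : f = ∑ k ∈ range (N + 1), F k := funext fun x => by rw [hdecomp, Finset.sum_apply]
  have hbound : |(fdiff h)^[N] f ((a + b) / 2)| ≤ 2 ^ N * M :=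
    abs_iterate_fdiff_le fun y hy => hbdd y (by
      rw [abs_le] at hy
      constructor <;> nlinarith [abs_nonneg h])
  rw [hf, iterate_fdiff_sum_monomials hmono, abs_mul, Nat.abs_cast] at hbound
  have hfact : (1 : ℝ) ≤ N.factorial := by exact_mod_cast N.factorial_pos
  nlinarith [abs_nonneg (F N h)]

theorem stmt19 (N : ℕ) (f : ℝ → ℝ)
    (hf : ∀ x h : ℝ, ((fdiff h)^[N + 1] f) x = 0)
    (F : ℕ → (ℝ → ℝ)) (hmono : ∀ k ≤ N, IsMonomial k (F k))
    (hdecomp : ∀ x : ℝ, f x = ∑ k ∈ Finset.range (N + 1), F k x)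
    (hdisc : ¬ Continuous (F N)) :
    ∀ a b : ℝ, a < b → ∀ M : ℝ, ∃ x ∈ Set.Icc a b, M < |f x| :=
  stmt19_general N f F hmono hdecomp hdisc
end
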